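/- Let H be a thin spider with partition (S, K, R) such that the subgraph H[R] of H induced by R is P4-sparse, let u ∈ R, and let uw be a tail added to H (w ∉ V(H)). Let f' be the minimum number of fill edges (excluding uw) in a P4-sparse completion of the graph H[R]+uw. Then the minimum number of fill edges (excluding the tail uw) in a P4-sparse completion of H+uw equals min{ |R \ N_H[u]| , |K| + f' }, where N_H[u] is the closed neighborhood of u in H. -/

import Mathlib

/-!
A P₄-sparse completion `G'` of `H + uw` either joins `u` or `w` to every vertex of
`R \ N[u]`, which costs `|R \ N[u]|` fill edges, or leaves some `x ∈ R \ N[u]` adjacent to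
neither. In the latter case, for every leg `s – f s` of the spider one of `ws`, `w (f s)`, `us`
is a fill edge, since otherwise `w u (f s) s` and `w u (f s) x` are two P₄s on five vertices.
These `|S| = |K|` fill edges leave `R ∪ {w}`, while the fill edges inside `R ∪ {w}` form a
P₄-sparse completion of `H[R] + uw`, so there are at least `|K| + f'` fill edges.

Both values are attained. Joining `u` to `R \ N[u]` yields the thin spider with clique
`K ∪ {u}`, legs `S ∪ {w}` and head `R \ {u}`; adding an optimal completion of `H[R] + uw`
and joining `w` to `K` yields the thin spider with head `R ∪ {w}`. A thin spider whose head is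
P₄-sparse is P₄-sparse: a P₄ either lies in the head or is `s (f s) (f s') s'`, and two P₄s
of the second kind inside five vertices coincide because `f` is injective.
-/

open SimpleGraph Set

variable {α : Type*}

/-- The graph `G + uw` obtained from `G` by adding the tail edge `uw`. -/
def addTail (G : SimpleGraph α) (u w : α) : SimpleGraph α :=
  G ⊔ SimpleGraph.fromEdgeSet {s(u, w)}

/-- The number of fill edges of a completion `G'` of the base graph `base`:
the edges of `G'` that are not edges of `base`. -/
noncomputable def fillCount (base G' : SimpleGraph α) : ℕ :=
  (G'.edgeSet \ base.edgeSet).ncard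

/-- `S` is an independent set of the graph `G`. -/
def IsIndepSetOn (G : SimpleGraph α) (S : Set α) : Prop :=
  ∀ x ∈ S, ∀ y ∈ S, ¬ G.Adj x y

/-- A graph is split if its vertex set can be partitioned into a clique and an
independent set. -/
def IsSplitGraph (G : SimpleGraph α) : Prop :=
  ∃ K S : Set α, K ∪ S = Set.univ ∧ Disjoint K S ∧ G.IsClique K ∧ IsIndepSetOn G S

/-- `a b c d` (in this order) induce a chordless path `P₄` in `G`. -/
def IsInducedP4 (G : SimpleGraph α) (a b c d : α) : Prop :=
  a ≠ b ∧ a ≠ c ∧ a ≠ d ∧ b ≠ c ∧ b ≠ d ∧ c ≠ d ∧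
  G.Adj a b ∧ G.Adj b c ∧ G.Adj c d ∧ ¬ G.Adj a c ∧ ¬ G.Adj a d ∧ ¬ G.Adj b d

/-- `a b c d` (in this order) induce a chordless cycle `C₄` in `G`. -/
def IsInducedC4 (G : SimpleGraph α) (a b c d : α) : Prop :=
  a ≠ b ∧ a ≠ c ∧ a ≠ d ∧ b ≠ c ∧ b ≠ d ∧ c ≠ d ∧
  G.Adj a b ∧ G.Adj b c ∧ G.Adj c d ∧ G.Adj d a ∧ ¬ G.Adj a c ∧ ¬ G.Adj b d

/-- `a b c d` induce a `2K₂` (two independent edges `ab` and `cd`) in `G`. -/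
def IsInduced2K2 (G : SimpleGraph α) (a b c d : α) : Prop :=
  a ≠ b ∧ a ≠ c ∧ a ≠ d ∧ b ≠ c ∧ b ≠ d ∧ c ≠ d ∧
  G.Adj a b ∧ G.Adj c d ∧ ¬ G.Adj a c ∧ ¬ G.Adj a d ∧ ¬ G.Adj b c ∧ ¬ G.Adj b d

/-- A graph is threshold iff it has no induced `C₄`, `P₄`, or `2K₂`. -/
def IsThresholdGraph (G : SimpleGraph α) : Prop :=
  (∀ a b c d, ¬ IsInducedC4 G a b c d) ∧ (∀ a b c d, ¬ IsInducedP4 G a b c d) ∧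
  (∀ a b c d, ¬ IsInduced2K2 G a b c d)

/-- A graph is quasi-threshold iff it has no induced `C₄` or `P₄`. -/
def IsQuasiThresholdGraph (G : SimpleGraph α) : Prop :=
  (∀ a b c d, ¬ IsInducedC4 G a b c d) ∧ (∀ a b c d, ¬ IsInducedP4 G a b c d)

/-- `t` is the vertex set of an induced `P₄` of `G`. -/
def IsP4SetOn (G : SimpleGraph α) (t : Set α) : Prop :=
  ∃ a b c d : α, t = {a, b, c, d} ∧ IsInducedP4 G a b c d

/-- A graph is `P₄`-sparse iff every set of five vertices induces at most one `P₄`. -/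
def IsP4Sparse (G : SimpleGraph α) : Prop :=
  ∀ s : Set α, s.ncard = 5 →
    ∀ t₁ ⊆ s, ∀ t₂ ⊆ s, IsP4SetOn G t₁ → IsP4SetOn G t₂ → t₁ = t₂

/-- The subgraph of `H` induced by the set `R` (as a graph on the same vertex type,
all vertices outside `R` being isolated). -/
def restrictSet (H : SimpleGraph α) (R : Set α) : SimpleGraph α where
  Adj x y := H.Adj x y ∧ x ∈ R ∧ y ∈ R
  symm := ⟨fun x y ⟨h, hx, hy⟩ => ⟨h.symm, hy, hx⟩⟩
  loopless := ⟨fun x h => H.irrefl h.1⟩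

/-- `(S, K, R)` is a thin-spider partition of (the vertex set of) `H`. -/
def ThinSpider (H : SimpleGraph α) (S K R : Set α) : Prop :=
  IsIndepSetOn H S ∧ H.IsClique K ∧ S.ncard = K.ncard ∧ 2 ≤ K.ncard ∧
  Disjoint S K ∧ Disjoint S R ∧ Disjoint K R ∧
  (∀ r ∈ R, ∀ k ∈ K, H.Adj r k) ∧ (∀ r ∈ R, ∀ s ∈ S, ¬ H.Adj r s) ∧
  ∃ f : α → α, Set.BijOn f S K ∧ ∀ s ∈ S, ∀ k ∈ K, (H.Adj s k ↔ k = f s)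

/-- `(S, K, R)` is a thick-spider partition of (the vertex set of) `H`;
thick spiders are assumed to have `|K| ≥ 3`. -/
def ThickSpider (H : SimpleGraph α) (S K R : Set α) : Prop :=
  IsIndepSetOn H S ∧ H.IsClique K ∧ S.ncard = K.ncard ∧ 3 ≤ K.ncard ∧
  Disjoint S K ∧ Disjoint S R ∧ Disjoint K R ∧
  (∀ r ∈ R, ∀ k ∈ K, H.Adj r k) ∧ (∀ r ∈ R, ∀ s ∈ S, ¬ H.Adj r s) ∧
  ∃ f : α → α, Set.BijOn f S K ∧ ∀ s ∈ S, ∀ k ∈ K, (H.Adj s k ↔ k ≠ f s)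

/-- The set of possible numbers of fill edges of completions of `base` into the
graph class `C`. -/
def completionFills (C : SimpleGraph α → Prop) (base : SimpleGraph α) : Set ℕ :=
  {n | ∃ G' : SimpleGraph α, base ≤ G' ∧ C G' ∧ fillCount base G' = n}

theorem isInducedP4_of_adj {G : SimpleGraph α} {a b c d : α} (hab : G.Adj a b)
    (hbc : G.Adj b c) (hcd : G.Adj c d) (hac : ¬ G.Adj a c) (had : ¬ G.Adj a d)
    (hbd : ¬ G.Adj b d) : IsInducedP4 G a b c d := by
  refine ⟨hab.ne, ?_, ?_, hbc.ne, ?_, hcd.ne, hab, hbc, hcd, hac, had, hbd⟩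
  · rintro rfl; exact had hcd
  · rintro rfl; exact hac hcd.symm
  · rintro rfl; exact had hab

theorem IsInducedP4.symm {G : SimpleGraph α} {a b c d : α} (h : IsInducedP4 G a b c d) :
    IsInducedP4 G d c b a := by
  obtain ⟨-, -, -, -, -, -, hab, hbc, hcd, hac, had, hbd⟩ := h
  exact isInducedP4_of_adj hcd.symm hbc.symm hab.symm (fun h => hbd h.symm)
    (fun h => had h.symm) (fun h => hac h.symm)

theorem IsInducedP4.ncard_eq {G : SimpleGraph α} {a b c d : α} (h : IsInducedP4 G a b c d) :
    ({a, b, c, d} : Set α).ncard = 4 := by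
  obtain ⟨hab, hac, had, hbc, hbd, hcd, -⟩ := h
  rw [ncard_insert_of_notMem (by simp [hab, hac, had]),
    ncard_insert_of_notMem (by simp [hbc, hbd]), ncard_pair hcd]

theorem IsP4SetOn.ncard_eq {G : SimpleGraph α} {t : Set α} (h : IsP4SetOn G t) :
    t.ncard = 4 := by
  obtain ⟨a, b, c, d, rfl, h⟩ := h
  exact h.ncard_eq

theorem isInducedP4_restrictSet_iff {G : SimpleGraph α} {A : Set α} {a b c d : α} :
    IsInducedP4 (restrictSet G A) a b c d ↔
      IsInducedP4 G a b c d ∧ a ∈ A ∧ b ∈ A ∧ c ∈ A ∧ d ∈ A := by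
  simp only [IsInducedP4, restrictSet]
  tauto

theorem isP4SetOn_restrictSet_iff {G : SimpleGraph α} {A t : Set α} :
    IsP4SetOn (restrictSet G A) t ↔ IsP4SetOn G t ∧ t ⊆ A := by
  simp only [IsP4SetOn, isInducedP4_restrictSet_iff]
  constructor
  · rintro ⟨a, b, c, d, rfl, h, ha, hb, hc, hd⟩
    exact ⟨⟨a, b, c, d, rfl, h⟩, by simp [insert_subset_iff, *]⟩
  · rintro ⟨⟨a, b, c, d, rfl, h⟩, hA⟩
    simp only [insert_subset_iff, singleton_subset_iff] at hA
    exact ⟨a, b, c, d, rfl, h, hA⟩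

theorem IsP4Sparse.restrictSet {G : SimpleGraph α} (hG : IsP4Sparse G) (A : Set α) :
    IsP4Sparse (restrictSet G A) := fun s hs t₁ h₁ t₂ h₂ ht₁ ht₂ =>
  hG s hs t₁ h₁ t₂ h₂ (isP4SetOn_restrictSet_iff.1 ht₁).1
    (isP4SetOn_restrictSet_iff.1 ht₂).1

theorem IsP4Sparse.eq_of_isInducedP4 {G : SimpleGraph α} {a b c d e : α} (hG : IsP4Sparse G)
    (h₁ : IsInducedP4 G a b c d) (h₂ : IsInducedP4 G a b c e) : d = e := by
  by_contra hde
  have he : e ∉ ({a, b, c, d} : Set α) := by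
    obtain ⟨-, -, hae, -, hbe, hce, -⟩ := h₂
    simp [hae.symm, hbe.symm, hce.symm, Ne.symm hde]
  have h5 : ({e, a, b, c, d} : Set α).ncard = 5 := by
    rw [ncard_insert_of_notMem he, h₁.ncard_eq]
  have heq := hG _ h5 {a, b, c, d} (subset_insert _ _) {a, b, c, e}
    (by intro x; simp only [mem_insert_iff, mem_singleton_iff]; tauto)
    ⟨a, b, c, d, rfl, h₁⟩ ⟨a, b, c, e, rfl, h₂⟩
  have hd : d ∈ ({a, b, c, e} : Set α) := heq ▸ by simp
  obtain ⟨-, -, had, -, hbd, hcd, -⟩ := h₁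
  simp [had.symm, hbd.symm, hcd.symm, hde] at hd

theorem restrictSet_congr {G G' : SimpleGraph α} {A : Set α}
    (h : ∀ x ∈ A, ∀ y ∈ A, G.Adj x y ↔ G'.Adj x y) :
    restrictSet G A = restrictSet G' A := by
  ext x y
  simp only [restrictSet]
  exact ⟨fun ⟨hxy, hx, hy⟩ => ⟨(h x hx y hy).1 hxy, hx, hy⟩,
    fun ⟨hxy, hx, hy⟩ => ⟨(h x hx y hy).2 hxy, hx, hy⟩⟩

theorem edgeSet_restrictSet (G : SimpleGraph α) (A : Set α) :
    (restrictSet G A).edgeSet = G.edgeSet ∩ A.sym2 := by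
  ext e
  induction e using Sym2.ind
  simp [restrictSet]

theorem fillCount_restrictSet (B G : SimpleGraph α) (A : Set α) :
    fillCount (restrictSet B A) (restrictSet G A) = ((G.edgeSet \ B.edgeSet) ∩ A.sym2).ncard := by
  rw [fillCount, edgeSet_restrictSet, edgeSet_restrictSet, inter_sdiff_distrib_right]

theorem addTail_adj {G : SimpleGraph α} {u w x y : α} :
    (addTail G u w).Adj x y ↔ G.Adj x y ∨ (s(x, y) = s(u, w) ∧ x ≠ y) := by
  simp [addTail]

theorem addTail_adj_of_ne {G : SimpleGraph α} {u w x y : α} (hxu : x ≠ u) (hxw : x ≠ w) :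
    (addTail G u w).Adj x y ↔ G.Adj x y := by
  simp [addTail_adj, hxu, hxw]

theorem le_addTail (G : SimpleGraph α) (u w : α) : G ≤ addTail G u w := le_sup_left

theorem restrictSet_addTail {H : SimpleGraph α} {R : Set α} {u w : α} (hu : u ∈ R)
    (hw : ∀ x, ¬ H.Adj w x) :
    restrictSet (addTail H u w) (R ∪ {w}) = addTail (restrictSet H R) u w := by
  ext x y
  simp only [restrictSet, addTail_adj, mem_union, mem_singleton_iff]
  constructor
  · rintro ⟨h | h, hx, hy⟩
    · rcases hx with hx | rfl
      · rcases hy with hy | rfl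
        · exact Or.inl ⟨h, hx, hy⟩
        · exact absurd h.symm (hw x)
      · exact absurd h (hw y)
    · exact Or.inr h
  · rintro (⟨h, hx, hy⟩ | ⟨h, hne⟩)
    · exact ⟨Or.inl h, Or.inl hx, Or.inl hy⟩
    · refine ⟨Or.inr ⟨h, hne⟩, ?_⟩
      rcases Sym2.eq_iff.1 h with ⟨rfl, rfl⟩ | ⟨rfl, rfl⟩ <;> simp [hu]

def starOn (c : α) (D : Set α) : SimpleGraph α :=
  fromEdgeSet ((fun x => s(c, x)) '' D)

theorem starOn_adj {c x y : α} {D : Set α} :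
    (starOn c D).Adj x y ↔ x ≠ y ∧ (x = c ∧ y ∈ D ∨ y = c ∧ x ∈ D) := by
  simp only [starOn, fromEdgeSet_adj, mem_image, Sym2.eq_iff]
  constructor
  · rintro ⟨⟨z, hz, ⟨rfl, rfl⟩ | ⟨rfl, rfl⟩⟩, hne⟩
    · exact ⟨hne, Or.inl ⟨rfl, hz⟩⟩
    · exact ⟨hne, Or.inr ⟨rfl, hz⟩⟩
  · rintro ⟨hne, ⟨rfl, hy⟩ | ⟨rfl, hx⟩⟩
    · exact ⟨⟨y, hy, Or.inl ⟨rfl, rfl⟩⟩, hne⟩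
    · exact ⟨⟨x, hx, Or.inr ⟨rfl, rfl⟩⟩, hne⟩

theorem not_starOn_adj_of_ne {c x y : α} {D : Set α} (hxc : x ≠ c) (hxD : x ∉ D) :
    ¬ (starOn c D).Adj x y := by
  simp [starOn_adj, hxc, hxD]

theorem addTail_sup_starOn_adj {H : SimpleGraph α} {u w y : α} {D : Set α}
    (hw : ∀ x, ¬ H.Adj w x) (hwu : w ≠ u) (hwD : w ∉ D) :
    (addTail H u w ⊔ starOn u D).Adj w y ↔ y = u := by
  rw [sup_adj, or_iff_left (not_starOn_adj_of_ne hwu hwD), addTail_adj, or_iff_right (hw y),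
    Sym2.eq_swap, Sym2.congr_left]
  exact ⟨And.left, fun h => ⟨h, h ▸ hwu⟩⟩

theorem fillCount_sup_self (B G : SimpleGraph α) : fillCount B (B ⊔ G) = fillCount B G := by
  rw [fillCount, fillCount, edgeSet_sup, union_sdiff_left]

theorem fillCount_restrictSet_left {B G : SimpleGraph α} {A : Set α}
    (hG : restrictSet G A = G) : fillCount (restrictSet B A) G = fillCount B G := by
  conv_lhs => rw [← hG]
  rw [fillCount_restrictSet, inter_eq_left.2, fillCount]
  rw [← hG, edgeSet_restrictSet]
  exact sdiff_subset.trans inter_subset_right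

theorem fillCount_sup_starOn [Finite α] {B X : SimpleGraph α} {c : α} {D : Set α}
    (hB : B ≤ X) (hc : c ∉ D) (hD : ∀ x ∈ D, ¬ X.Adj c x) :
    fillCount B (X ⊔ starOn c D) = fillCount B X + D.ncard := by
  have hstar : (starOn c D).edgeSet = (fun x => s(c, x)) '' D := by
    refine (edgeSet_fromEdgeSet _).trans (sdiff_eq_left.2 (disjoint_left.2 ?_))
    rintro _ ⟨x, hx, rfl⟩ hdiag
    exact hc (Sym2.mk_isDiag_iff.1 hdiag ▸ hx)
  have hdisj : Disjoint (X.edgeSet \ B.edgeSet) ((fun x => s(c, x)) '' D \ B.edgeSet) := by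
    refine disjoint_left.2 ?_
    rintro _ ⟨hX, -⟩ ⟨⟨x, hx, rfl⟩, -⟩
    exact hD x hx hX
  have hB' : Disjoint ((fun x => s(c, x)) '' D) B.edgeSet := by
    refine disjoint_left.2 ?_
    rintro _ ⟨x, hx, rfl⟩ hB'
    exact hD x hx (hB hB')
  rw [fillCount, fillCount, edgeSet_sup, hstar, union_sdiff_distrib, ncard_union_eq hdisj,
    hB'.sdiff_eq_left, ncard_image_of_injective _ fun _ _ => Sym2.congr_right.1]

theorem ncard_le_ncard_of_mk_mem {ι : Type*} {A : Set ι} {L : ι → Set α} {M : Set α}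
    {F : Set (Sym2 α)} (hF : F.Finite) (hL : A.PairwiseDisjoint L)
    (hLM : ∀ i ∈ A, Disjoint (L i) M)
    (h : ∀ i ∈ A, ∃ a ∈ L i, ∃ b ∈ M, s(a, b) ∈ F) :
    A.ncard ≤ F.ncard := by
  rcases A.eq_empty_or_nonempty with rfl | ⟨i₀, hi₀⟩
  · simp
  have : Nonempty α := let ⟨a, _⟩ := h i₀ hi₀; ⟨a⟩
  choose! a ha b hb hab using h
  refine ncard_le_ncard_of_injOn (fun i => s(a i, b i)) hab ?_ hF
  intro i hi j hj hij
  rcases Sym2.eq_iff.1 hij with ⟨h, -⟩ | ⟨h, -⟩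
  · exact hL.elim hi hj (not_disjoint_iff.2 ⟨a i, ha i hi, h ▸ ha j hj⟩)
  · exact absurd (h ▸ hb j hj) (disjoint_left.1 (hLM i hi) (ha i hi))

theorem bijOn_update_insert {β : Type*} [DecidableEq α] {f : α → β} {S : Set α}
    {T : Set β} {a : α} {b : β} (hf : BijOn f S T) (ha : a ∉ S) (hb : b ∉ T) :
    BijOn (Function.update f a b) (insert a S) (insert b T) := by
  have hf' : BijOn (Function.update f a b) S T :=
    hf.congr fun s hs => (Function.update_of_ne (ne_of_mem_of_not_mem hs ha) _ _).symm
  simpa using hf'.insert (a := a) (by simpa using hb)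

theorem pairwiseDisjoint_pair_of_injOn {S K : Set α} {f : α → α} (hSK : Disjoint S K)
    (hf : MapsTo f S K) (hinj : InjOn f S) : S.PairwiseDisjoint fun s => ({s, f s} : Set α) := by
  intro s hs t ht hst
  simp only [Function.onFun, disjoint_insert_left, disjoint_singleton_left, mem_insert_iff,
    mem_singleton_iff, not_or]
  exact ⟨⟨hst, ne_of_mem_of_not_mem hs (disjoint_right.1 hSK (hf ht))⟩,
    ne_of_mem_of_not_mem (hf hs) (disjoint_left.1 hSK ht), fun h => hst (hinj hs ht h)⟩

section ThinSpider

variable {G : SimpleGraph α} {S K R : Set α}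

theorem IsInducedP4.thinSpider_cases (hG : ThinSpider G S K R) (hcov : S ∪ K ∪ R = univ)
    {a b c d : α} (h : IsInducedP4 G a b c d) :
    (a ∈ R ∧ b ∈ R ∧ c ∈ R ∧ d ∈ R) ∨
      (a ∈ S ∧ b ∈ K ∧ c ∈ K ∧ d ∈ S) := by
  obtain ⟨hS, hK, -, -, -, -, -, hRK, hRS, -⟩ := hG
  have tri : ∀ v, v ∈ S ∨ v ∈ K ∨ v ∈ R := fun v => by
    simpa only [mem_union, or_assoc] using hcov.ge (mem_univ v)
  have nbr : ∀ s ∈ S, ∀ x, G.Adj s x → x ∈ K := fun s hs x hsx => by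
    rcases tri x with hx | hx | hx
    · exact absurd hsx (hS s hs x hx)
    · exact hx
    · exact absurd hsx.symm (hRS x hx s hs)
  have end_S : ∀ {a b c d}, IsInducedP4 G a b c d → b ∈ K →
      a ∈ S ∧ c ∈ K ∧ d ∈ S := by
    rintro a b c d ⟨-, hac, -, -, hbd, -, -, -, hcd, nac, -, nbd⟩ hb
    have hd : d ∈ S := (tri d).resolve_right (not_or.2
      ⟨fun hd => nbd (hK hb hd hbd), fun hd => nbd (hRK d hd b hb).symm⟩)
    have hc : c ∈ K := nbr d hd c hcd.symm
    have ha : a ∈ S := (tri a).resolve_right (not_or.2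
      ⟨fun ha => nac (hK ha hc hac), fun ha => nac (hRK a ha c hc)⟩)
    exact ⟨ha, hc, hd⟩
  have ⟨_, hac, _, _, hbd, _, hab, hbc, hcd, nac, _, nbd⟩ := h
  have hb : b ∉ S := fun hb => nac (hK (nbr b hb a hab.symm) (nbr b hb c hbc) hac)
  have hc : c ∉ S := fun hc => nbd (hK (nbr c hc b hbc.symm) (nbr c hc d hcd) hbd)
  by_cases hbK : b ∈ K
  · obtain ⟨ha, hcK, hd⟩ := end_S h hbK
    exact Or.inr ⟨ha, hbK, hcK, hd⟩
  by_cases hcK : c ∈ K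
  · exact absurd (end_S h.symm hcK).2.1 hbK
  have hbR : b ∈ R := ((tri b).resolve_left hb).resolve_left hbK
  have hcR : c ∈ R := ((tri c).resolve_left hc).resolve_left hcK
  refine Or.inl ⟨?_, hbR, hcR, ?_⟩
  · exact ((tri a).resolve_left fun ha => hRS b hbR a ha hab.symm).resolve_left
      fun ha => nac (hRK c hcR a ha).symm
  · exact ((tri d).resolve_left fun hd => hRS c hcR d hd hcd).resolve_left
      fun hd => nbd (hRK b hbR d hd)

theorem IsP4SetOn.thinSpider_cases (hG : ThinSpider G S K R) (hcov : S ∪ K ∪ R = univ)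
    {f : α → α} (hadj : ∀ s ∈ S, ∀ k ∈ K, (G.Adj s k ↔ k = f s)) {t : Set α}
    (ht : IsP4SetOn G t) : t ⊆ R ∨ ∃ P ⊆ S, P.ncard = 2 ∧ t = P ∪ f '' P := by
  obtain ⟨a, b, c, d, rfl, h⟩ := ht
  rcases h.thinSpider_cases hG hcov with ⟨ha, hb, hc, hd⟩ | ⟨ha, hb, hc, hd⟩
  · exact Or.inl (by simp [insert_subset_iff, *])
  · obtain ⟨-, -, had, -, -, -, hab, -, hcd, -⟩ := h
    have hb : b = f a := (hadj a ha b hb).1 hab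
    have hc : c = f d := (hadj d hd c hc).1 hcd.symm
    refine Or.inr ⟨{a, d}, by simp [insert_subset_iff, *], ncard_pair had, ?_⟩
    rw [image_pair, ← hb, ← hc]
    ext x
    simp only [mem_insert_iff, mem_singleton_iff, mem_union]
    tauto

theorem isP4Sparse_of_thinSpider (hG : ThinSpider G S K R) (hcov : S ∪ K ∪ R = univ)
    (hR : IsP4Sparse (restrictSet G R)) : IsP4Sparse G := by
  intro σ hσ t₁ ht₁ t₂ ht₂ h₁ h₂
  have hσf : σ.Finite := finite_of_ncard_ne_zero (by omega)
  have ⟨_, _, _, _, hSK, hSR, hKR, _, _, f, hf, hadj⟩ := hG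
  have legs : ∀ P ⊆ S, P ∪ f '' P ⊆ σ → (P ∪ f '' P).ncard = P.ncard + P.ncard := by
    intro P hP hPσ
    rw [ncard_union_eq (hSK.mono hP (image_subset_iff.2 (hf.mapsTo.mono_left hP)))
      (hσf.subset (subset_union_left.trans hPσ)) (hσf.subset (subset_union_right.trans hPσ)),
      (hf.injOn.mono hP).ncard_image]
  have mixed : ∀ {t t'}, t ⊆ σ → t' ⊆ σ → IsP4SetOn G t → IsP4SetOn G t' →
      t ⊆ R → ∀ P ⊆ S, t' = P ∪ f '' P → False := by
    rintro t _ hσt hσt' ht ht' htR P hP rfl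
    have hdisj : Disjoint t (P ∪ f '' P) := disjoint_union_right.2
      ⟨hSR.symm.mono htR hP, hKR.symm.mono htR (image_subset_iff.2 (hf.mapsTo.mono_left hP))⟩
    have := ncard_le_ncard (union_subset hσt hσt') hσf
    rw [ncard_union_eq hdisj (hσf.subset hσt) (hσf.subset hσt'), ht.ncard_eq, ht'.ncard_eq,
      hσ] at this
    omega
  rcases h₁.thinSpider_cases hG hcov hadj with hR₁ | ⟨P₁, hP₁, hcard₁, rfl⟩ <;>
    rcases h₂.thinSpider_cases hG hcov hadj with hR₂ | ⟨P₂, hP₂, hcard₂, rfl⟩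
  · exact hR σ hσ _ ht₁ _ ht₂ (isP4SetOn_restrictSet_iff.2 ⟨h₁, hR₁⟩)
      (isP4SetOn_restrictSet_iff.2 ⟨h₂, hR₂⟩)
  · exact (mixed ht₁ ht₂ h₁ h₂ hR₁ P₂ hP₂ rfl).elim
  · exact (mixed ht₂ ht₁ h₂ h₁ hR₂ P₁ hP₁ rfl).elim
  · set P := P₁ ∪ P₂
    have hPσ : P ∪ f '' P ⊆ σ := by
      rw [image_union, union_union_union_comm]
      exact union_subset ht₁ ht₂
    have hP : P.ncard ≤ 2 := by
      have := (ncard_le_ncard hPσ hσf).trans_eq hσ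
      rw [legs P (union_subset hP₁ hP₂) hPσ] at this
      omega
    have hPf : P.Finite := hσf.subset (subset_union_left.trans hPσ)
    have hP₁ := eq_of_subset_of_ncard_le subset_union_left (hP.trans hcard₁.ge) hPf
    have hP₂ := eq_of_subset_of_ncard_le subset_union_right (hP.trans hcard₂.ge) hPf
    rw [hP₁.trans hP₂.symm]

end ThinSpider

section Tail

variable {H : SimpleGraph α} {S K R : Set α} {u w : α}

theorem notMem_of_union_eq_compl_singleton (h : S ∪ K ∪ R = {w}ᶜ) :
    w ∉ S ∧ w ∉ K ∧ w ∉ R := by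
  have hw : w ∉ S ∪ K ∪ R := by simp [h]
  simp only [mem_union, not_or] at hw
  exact ⟨hw.1.1, hw.1.2, hw.2⟩

theorem thinSpider_addTail_sup_starOn [Finite α] (hG : ThinSpider H S K R) (hwS : w ∉ S)
    (hwK : w ∉ K) (hwR : w ∉ R) (hw : ∀ x, ¬ H.Adj w x) (hu : u ∈ R) :
    ThinSpider (addTail H u w ⊔ starOn u (R \ (H.neighborSet u ∪ {u})))
      (insert w S) (insert u K) (R \ {u}) := by
  classical
  obtain ⟨hS, hK, hcard, hK2, hSK, hSR, hKR, hRK, hRS, f, hf, hadj⟩ := hG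
  set G₁ := addTail H u w ⊔ starOn u (R \ (H.neighborSet u ∪ {u}))
  have huS : u ∉ S := disjoint_right.1 hSR hu
  have huK : u ∉ K := disjoint_right.1 hKR hu
  have hwu : w ≠ u := fun h => hwR (h ▸ hu)
  have hHG₁ : H ≤ G₁ := le_sup_left.trans le_sup_left
  have adj_S : ∀ s ∈ S, ∀ y, G₁.Adj s y ↔ H.Adj s y := fun s hs y => by
    have hsu : s ≠ u := ne_of_mem_of_not_mem hs huS
    have hsD : s ∉ R \ (H.neighborSet u ∪ {u}) := fun h => disjoint_left.1 hSR hs h.1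
    rw [sup_adj, addTail_adj_of_ne hsu (ne_of_mem_of_not_mem hs hwS)]
    exact or_iff_left (not_starOn_adj_of_ne hsu hsD)
  have adj_w : ∀ y, G₁.Adj w y ↔ y = u := fun _ =>
    addTail_sup_starOn_adj hw hwu fun h => hwR h.1
  have adj_u : ∀ r ∈ R \ {u}, G₁.Adj r u := fun r ⟨hr, hru⟩ => by
    by_cases hur : H.Adj u r
    · exact hHG₁ hur.symm
    · refine Or.inr (starOn_adj.2 ⟨hru, Or.inr ⟨rfl, hr, ?_⟩⟩)
      rintro (h | h)
      exacts [hur h, hru h]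
  refine ⟨?_, (hK.mono hHG₁).insert fun k hk _ => hHG₁ (hRK u hu k hk), ?_, ?_, ?_, ?_, ?_,
    ?_, ?_, Function.update f w u, ?_, ?_⟩
  · rintro x (rfl | hx) y (rfl | hy) hxy
    · exact hxy.ne rfl
    · exact huS ((adj_w y).1 hxy ▸ hy)
    · exact huS ((adj_w x).1 hxy.symm ▸ hx)
    · exact hS x hx y hy ((adj_S x hx y).1 hxy)
  · rw [ncard_insert_of_notMem hwS, ncard_insert_of_notMem huK, hcard]
  · rw [ncard_insert_of_notMem huK]; omega
  · simp [hSK, huS, hwK, hwu.symm]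
  · simp [hSR.mono_right sdiff_subset, hwR]
  · simp [hKR.mono_right sdiff_subset]
  · rintro r hr k (rfl | hk)
    exacts [adj_u r hr, hHG₁ (hRK r hr.1 k hk)]
  · rintro r ⟨hr, hru⟩ s (rfl | hs) hrs
    · exact hru ((adj_w r).1 hrs.symm)
    · exact hRS r hr s hs ((adj_S s hs r).1 hrs.symm).symm
  · exact bijOn_update_insert hf hwS huK
  · rintro s (rfl | hs) k hk
    · rw [Function.update_self, adj_w]
    · rw [Function.update_of_ne (ne_of_mem_of_not_mem hs hwS), adj_S s hs]
      rcases hk with rfl | hk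
      · exact iff_of_false (fun h => hRS k hu s hs h.symm) fun h => huK (h ▸ hf.mapsTo hs)
      · exact hadj s hs k hk

theorem ncard_nonNeighbors_mem_completionFills [Finite α] (hG : ThinSpider H S K R)
    (hcover : S ∪ K ∪ R = {w}ᶜ) (hw : ∀ x, ¬ H.Adj w x) (hu : u ∈ R)
    (hR : IsP4Sparse (restrictSet H R)) :
    (R \ (H.neighborSet u ∪ {u})).ncard ∈ completionFills IsP4Sparse (addTail H u w) := by
  obtain ⟨hwS, hwK, hwR⟩ := notMem_of_union_eq_compl_singleton hcover
  have hcov : insert w S ∪ insert u K ∪ R \ {u} = univ := by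
    refine eq_univ_of_forall fun v => ?_
    have hv : v = w ∨ v ∈ S ∪ K ∪ R := by
      rw [hcover, mem_compl_singleton_iff]; exact em _
    simp only [mem_union, mem_insert_iff, mem_sdiff, mem_singleton_iff] at hv ⊢
    tauto
  have hhead : ∀ x ∈ R \ {u}, ∀ y ∈ R \ {u},
      (addTail H u w ⊔ starOn u (R \ (H.neighborSet u ∪ {u}))).Adj x y ↔
        (restrictSet H R).Adj x y := by
    rintro x ⟨hx, hxu : x ≠ u⟩ y ⟨hy, hyu : y ≠ u⟩
    rw [sup_adj, addTail_adj_of_ne hxu (ne_of_mem_of_not_mem hx hwR)]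
    simp [starOn_adj, restrictSet, hx, hy, hxu, hyu]
  have hD : ∀ x ∈ R \ (H.neighborSet u ∪ {u}), ¬ (addTail H u w).Adj u x := by
    rintro x ⟨hx, hxN⟩ hux
    rcases addTail_adj.1 hux with h | ⟨h, -⟩
    · exact hxN (Or.inl h)
    · exact hwR (Sym2.congr_right.1 h ▸ hx)
  refine ⟨_, le_sup_left, isP4Sparse_of_thinSpider
    (thinSpider_addTail_sup_starOn hG hwS hwK hwR hw hu) hcov ?_, ?_⟩
  · rw [restrictSet_congr hhead]
    exact hR.restrictSet _
  · rw [fillCount_sup_starOn le_rfl (fun h => h.2 (Or.inr rfl)) hD]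
    simp [fillCount]

theorem thinSpider_sup_starOn (hG : ThinSpider H S K R) (hwS : w ∉ S) (hwK : w ∉ K)
    (hw : ∀ x, ¬ H.Adj w x) (hu : u ∈ R) {G'' : SimpleGraph α}
    (hsupp : ∀ x y, G''.Adj x y → x ∈ R ∪ {w} ∧ y ∈ R ∪ {w}) :
    ThinSpider (addTail H u w ⊔ G'' ⊔ starOn w K) S K (R ∪ {w}) := by
  obtain ⟨hS, hK, hcard, hK2, hSK, hSR, hKR, hRK, hRS, f, hf, hadj⟩ := hG
  set G₂ := addTail H u w ⊔ G'' ⊔ starOn w K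
  have hHG₂ : H ≤ G₂ := (le_addTail H u w).trans (le_sup_left.trans le_sup_left)
  have adj_S : ∀ s ∈ S, ∀ y, G₂.Adj s y ↔ H.Adj s y := fun s hs y => by
    have hsA : s ∉ R ∪ {w} := by simp [disjoint_left.1 hSR hs, ne_of_mem_of_not_mem hs hwS]
    rw [sup_adj, sup_adj, addTail_adj_of_ne (ne_of_mem_of_not_mem hs (disjoint_right.1 hSR hu))
      (ne_of_mem_of_not_mem hs hwS), or_iff_left fun h => hsA (hsupp s y h).1,
      or_iff_left (not_starOn_adj_of_ne (ne_of_mem_of_not_mem hs hwS) (disjoint_left.1 hSK hs))]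
  refine ⟨fun x hx y hy h => hS x hx y hy ((adj_S x hx y).1 h), hK.mono hHG₂, hcard, hK2, hSK,
    by simp [hSR, hwS], by simp [hKR, hwK], ?_, ?_, f, hf, fun s hs k hk => ?_⟩
  · rintro r (hr | rfl) k hk
    · exact hHG₂ (hRK r hr k hk)
    · exact Or.inr (starOn_adj.2 ⟨(ne_of_mem_of_not_mem hk hwK).symm, Or.inl ⟨rfl, hk⟩⟩)
  · rintro r hr s hs h
    rcases hr with hr | rfl
    · exact hRS r hr s hs ((adj_S s hs r).1 h.symm).symm
    · exact hw s ((adj_S s hs r).1 h.symm).symm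
  · rw [adj_S s hs, hadj s hs k hk]

theorem ncard_add_fillCount_mem_completionFills [Finite α] (hG : ThinSpider H S K R)
    (hcover : S ∪ K ∪ R = {w}ᶜ) (hw : ∀ x, ¬ H.Adj w x) (hu : u ∈ R)
    {G'' : SimpleGraph α} (hle : addTail (restrictSet H R) u w ≤ G'')
    (hsupp : ∀ x y, G''.Adj x y → x ∈ R ∪ {w} ∧ y ∈ R ∪ {w}) (hsp : IsP4Sparse G'') :
    K.ncard + fillCount (addTail (restrictSet H R) u w) G'' ∈
      completionFills IsP4Sparse (addTail H u w) := by
  obtain ⟨hwS, hwK, hwR⟩ := notMem_of_union_eq_compl_singleton hcover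
  have ⟨_, _, _, _, _, _, hKR, _⟩ := hG
  have hG'' : restrictSet G'' (R ∪ {w}) = G'' := by
    ext x y
    exact ⟨And.left, fun h => ⟨h, hsupp x y h⟩⟩
  have hhead : ∀ x ∈ R ∪ {w}, ∀ y ∈ R ∪ {w},
      (addTail H u w ⊔ G'' ⊔ starOn w K).Adj x y ↔ G''.Adj x y := by
    intro x hx y hy
    refine ⟨fun h => ?_, fun h => Or.inl (Or.inr h)⟩
    rcases h with (h | h) | h
    · have h' : (restrictSet (addTail H u w) (R ∪ {w})).Adj x y := ⟨h, hx, hy⟩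
      exact hle (restrictSet_addTail hu hw ▸ h')
    · exact h
    · have hKA : ∀ v ∈ K, v ∉ R ∪ {w} := fun v hv => by
        simp [disjoint_left.1 hKR hv, ne_of_mem_of_not_mem hv hwK]
      rcases (starOn_adj.1 h).2 with ⟨-, hyK⟩ | ⟨-, hxK⟩
      exacts [(hKA y hyK hy).elim, (hKA x hxK hx).elim]
  have hD : ∀ k ∈ K, ¬ (addTail H u w ⊔ G'').Adj w k := by
    rintro k hk ((h | ⟨h, -⟩) | h)
    · exact hw k h
    · rcases Sym2.eq_iff.1 h with ⟨hwu, -⟩ | ⟨-, rfl⟩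
      exacts [hwR (hwu ▸ hu), disjoint_left.1 hKR hk hu]
    · rcases (hsupp w k h).2 with hkR | hkw
      exacts [disjoint_left.1 hKR hk hkR, hwK (mem_singleton_iff.1 hkw ▸ hk)]
  refine ⟨_, le_sup_left.trans le_sup_left, isP4Sparse_of_thinSpider
    (thinSpider_sup_starOn hG hwS hwK hw hu hsupp) ?_ ?_, ?_⟩
  · rw [← union_assoc, hcover, compl_union_self]
  · rwa [restrictSet_congr hhead, hG'']
  · rw [fillCount_sup_starOn le_sup_left hwK hD, fillCount_sup_self, ← restrictSet_addTail hu hw,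
      fillCount_restrictSet_left hG'', add_comm]

theorem ncard_nonNeighbors_le_fillCount [Finite α] (hwR : w ∉ R) (hw : ∀ x, ¬ H.Adj w x)
    {G' : SimpleGraph α} (h : ∀ x ∈ R \ (H.neighborSet u ∪ {u}), G'.Adj w x ∨ G'.Adj u x) :
    (R \ (H.neighborSet u ∪ {u})).ncard ≤ fillCount (addTail H u w) G' := by
  refine ncard_le_ncard_of_mk_mem (toFinite _) (pairwiseDisjoint_singleton' _) (M := {w, u})
    (fun x ⟨hx, hxN⟩ => ?_) (fun x hx => ?_)
  · simp only [disjoint_singleton_left, mem_insert_iff, mem_singleton_iff, not_or]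
    exact ⟨ne_of_mem_of_not_mem hx hwR, fun h => hxN (Or.inr h)⟩
  · have hxu : x ≠ u := fun h => hx.2 (Or.inr h)
    have hxw : x ≠ w := ne_of_mem_of_not_mem hx.1 hwR
    refine ⟨x, rfl, ?_⟩
    rcases h x hx with hwx | hux
    · refine ⟨w, Or.inl rfl, hwx.symm, ?_⟩
      exact fun h => hw x ((addTail_adj_of_ne hxu hxw).1 h).symm
    · refine ⟨u, Or.inr rfl, hux.symm, ?_⟩
      exact fun h => hx.2 (Or.inl ((addTail_adj_of_ne hxu hxw).1 h).symm)

theorem adj_or_adj_or_adj_of_isP4Sparse (hG : ThinSpider H S K R) (hwR : w ∉ R)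
    (hu : u ∈ R) {G' : SimpleGraph α} (hle : addTail H u w ≤ G') (hsp : IsP4Sparse G') {x : α}
    (hx : x ∈ R) (hwx : ¬ G'.Adj w x) (hux : ¬ G'.Adj u x) {s k : α} (hs : s ∈ S)
    (hk : k ∈ K) (hsk : H.Adj s k) : G'.Adj w k ∨ G'.Adj w s ∨ G'.Adj u s := by
  obtain ⟨-, -, -, -, -, hSR, -, hRK, -⟩ := hG
  by_contra! h
  have hwu : G'.Adj w u :=
    hle (addTail_adj.2 (Or.inr ⟨Sym2.eq_swap, (ne_of_mem_of_not_mem hu hwR).symm⟩))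
  have hH : H ≤ G' := (le_addTail H u w).trans hle
  have hsx := hsp.eq_of_isInducedP4 (isInducedP4_of_adj hwu (hH (hRK u hu k hk)) (hH hsk.symm)
    h.1 h.2.1 h.2.2) (isInducedP4_of_adj hwu (hH (hRK u hu k hk)) (hH (hRK x hx k hk).symm)
    h.1 hwx hux)
  exact disjoint_left.1 hSR hs (hsx ▸ hx)

theorem ncard_le_ncard_fill_sdiff_sym2 [Finite α] (hG : ThinSpider H S K R) (hwS : w ∉ S)
    (hwK : w ∉ K) (hwR : w ∉ R) (hw : ∀ x, ¬ H.Adj w x) (hu : u ∈ R) {G' : SimpleGraph α}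
    (hle : addTail H u w ≤ G') (hsp : IsP4Sparse G') {x : α} (hx : x ∈ R)
    (hwx : ¬ G'.Adj w x) (hux : ¬ G'.Adj u x) :
    S.ncard ≤ ((G'.edgeSet \ (addTail H u w).edgeSet) \ (R ∪ {w}).sym2).ncard := by
  have ⟨_, _, _, _, hSK, hSR, hKR, _, hRS, f, hf, hadj⟩ := hG
  have huS : u ∉ S := disjoint_right.1 hSR hu
  have huK : u ∉ K := disjoint_right.1 hKR hu
  have hmem : ∀ a b, a ∉ R → a ≠ w → a ≠ u → G'.Adj a b → ¬ H.Adj a b →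
      s(a, b) ∈ (G'.edgeSet \ (addTail H u w).edgeSet) \ (R ∪ {w}).sym2 :=
    fun a b haR haw hau hab hHab =>
      ⟨⟨hab, fun h => hHab ((addTail_adj_of_ne hau haw).1 h)⟩, fun h => (h.1).elim haR haw⟩
  refine ncard_le_ncard_of_mk_mem (toFinite _) (L := fun s => {s, f s}) (M := {w, u})
    (pairwiseDisjoint_pair_of_injOn hSK hf.mapsTo hf.injOn) (fun s hs => ?_) fun s hs => ?_
  · have hfs := hf.mapsTo hs
    simp [(ne_of_mem_of_not_mem hs hwS).symm, (ne_of_mem_of_not_mem hs huS).symm,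
      (ne_of_mem_of_not_mem hfs hwK).symm, (ne_of_mem_of_not_mem hfs huK).symm]
  have hsR := disjoint_left.1 hSR hs
  have hfs := hf.mapsTo hs
  rcases adj_or_adj_or_adj_of_isP4Sparse hG hwR hu hle hsp hx hwx hux hs hfs
    ((hadj s hs _ hfs).2 rfl) with h | h | h
  · exact ⟨f s, Or.inr rfl, w, Or.inl rfl, hmem _ _ (disjoint_left.1 hKR hfs)
      (ne_of_mem_of_not_mem hfs hwK) (ne_of_mem_of_not_mem hfs huK) h.symm fun h => hw _ h.symm⟩
  · exact ⟨s, Or.inl rfl, w, Or.inl rfl, hmem _ _ hsR (ne_of_mem_of_not_mem hs hwS)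
      (ne_of_mem_of_not_mem hs huS) h.symm fun h => hw _ h.symm⟩
  · exact ⟨s, Or.inl rfl, u, Or.inr rfl, hmem _ _ hsR (ne_of_mem_of_not_mem hs hwS)
      (ne_of_mem_of_not_mem hs huS) h.symm fun h => hRS u hu s hs h.symm⟩

theorem ncard_add_le_fillCount [Finite α] (hG : ThinSpider H S K R) (hwS : w ∉ S)
    (hwK : w ∉ K) (hwR : w ∉ R) (hw : ∀ x, ¬ H.Adj w x) (hu : u ∈ R) {f' : ℕ}
    (hf' : f' ∈ lowerBounds {n | ∃ G'' : SimpleGraph α,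
        addTail (restrictSet H R) u w ≤ G'' ∧
        (∀ x y, G''.Adj x y → x ∈ R ∪ {w} ∧ y ∈ R ∪ {w}) ∧
        IsP4Sparse G'' ∧ fillCount (addTail (restrictSet H R) u w) G'' = n})
    {G' : SimpleGraph α} (hle : addTail H u w ≤ G') (hsp : IsP4Sparse G') {x : α}
    (hx : x ∈ R) (hwx : ¬ G'.Adj w x) (hux : ¬ G'.Adj u x) :
    K.ncard + f' ≤ fillCount (addTail H u w) G' := by
  have ⟨_, _, hcard, _⟩ := hG
  have houtside := ncard_le_ncard_fill_sdiff_sym2 hG hwS hwK hwR hw hu hle hsp hx hwx hux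
  set F := G'.edgeSet \ (addTail H u w).edgeSet
  have hinside : f' ≤ (F ∩ (R ∪ {w}).sym2).ncard := by
    rw [← fillCount_restrictSet, restrictSet_addTail hu hw]
    refine hf' ⟨restrictSet G' (R ∪ {w}), fun a b hab => ?_, fun a b hab => hab.2,
      hsp.restrictSet _, rfl⟩
    rw [← restrictSet_addTail hu hw] at hab
    exact ⟨hle hab.1, hab.2⟩
  calc K.ncard + f' ≤ (F \ (R ∪ {w}).sym2).ncard + (F ∩ (R ∪ {w}).sym2).ncard := by omega
    _ = fillCount (addTail H u w) G' := by
      rw [add_comm, ncard_inter_add_ncard_sdiff_eq_ncard]; rfl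

end Tail

/-- tail at `u ∈ R` of a thin spider with `H[R]` P₄-sparse, where `f'`
is the minimum number of fill edges of a P₄-sparse completion of `H[R]+uw`. -/
theorem thinSpider_tail_R [Fintype α]
    (H : SimpleGraph α) (u w : α) (S K R : Set α)
    (hspider : ThinSpider H S K R)
    (hcover : S ∪ K ∪ R = {w}ᶜ)
    (hw : ∀ x, ¬ H.Adj w x)
    (hRsparse : IsP4Sparse (restrictSet H R)) (hu : u ∈ R)
    (f' : ℕ)
    (hf' : IsLeast {n | ∃ G'' : SimpleGraph α,
        addTail (restrictSet H R) u w ≤ G'' ∧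
        (∀ x y, G''.Adj x y → x ∈ R ∪ {w} ∧ y ∈ R ∪ {w}) ∧
        IsP4Sparse G'' ∧ fillCount (addTail (restrictSet H R) u w) G'' = n} f') :
    IsLeast (completionFills IsP4Sparse (addTail H u w))
      (min (R \ (H.neighborSet u ∪ {u})).ncard (K.ncard + f')) := by
  obtain ⟨hwS, hwK, hwR⟩ := notMem_of_union_eq_compl_singleton hcover
  obtain ⟨⟨G'', hle, hsupp, hsp, hfill⟩, hf'⟩ := hf'
  refine ⟨?_, ?_⟩
  · rcases min_choice (R \ (H.neighborSet u ∪ {u})).ncard (K.ncard + f') with h | h <;> rw [h]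
    · exact ncard_nonNeighbors_mem_completionFills hspider hcover hw hu hRsparse
    · exact hfill ▸ ncard_add_fillCount_mem_completionFills hspider hcover hw hu hle hsupp hsp
  · rintro _ ⟨G', hle', hsp', rfl⟩
    by_cases hcase : ∀ x ∈ R \ (H.neighborSet u ∪ {u}), G'.Adj w x ∨ G'.Adj u x
    · exact (min_le_left _ _).trans (ncard_nonNeighbors_le_fillCount hwR hw hcase)
    · push Not at hcase
      obtain ⟨x, hx, hwx, hux⟩ := hcase
      exact (min_le_right _ _).trans
        (ncard_add_le_fillCount hspider hwS hwK hwR hw hu hf' hle' hsp' hx.1 hwx hux)
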